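/- arXiv:1904.06455 — 4 statements merged into one kernel-verified Lean document; each statement's English description precedes it below -/
import Mathlib

section
/- Let X be a real D₁ × D₂ matrix and let d₁ ≤ D₁. Then the maximum of ‖UᵀX‖₁ over all real D₁ × d₁ matrices U with orthonormal columns (UᵀU = I_{d₁}) equals the maximum of ‖XB‖₊ over all sign matrices B ∈ {±1}^{D₂ × d₁}, and both maxima are attained. -/
open Matrix BigOperators

/-- Entrywise L1 norm of a real matrix. -/
noncomputable def l1Norm {m n : ℕ} (M : Matrix (Fin m) (Fin n) ℝ) : ℝ :=
  ∑ i, ∑ j, |M i j|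

/-- Nuclear norm of a real matrix: trace of the unique positive semidefinite
square root of the Gram matrix `Aᵀ * A`. -/
noncomputable def nuclearNorm {D d : ℕ} (A : Matrix (Fin D) (Fin d) ℝ) : ℝ :=
  (let hA : (Aᵀ * A).PosSemidef := by
      simpa using Matrix.posSemidef_conjTranspose_mul_self A
    hA.1.eigenvectorUnitary.1 * diagonal ((√·) ∘ hA.1.eigenvalues) *
      (star hA.1.eigenvectorUnitary : Matrix (Fin d) (Fin d) ℝ)).trace

/-!
Both maxima equal the maximum of `tr (Uᵀ X B)` over orthonormal `U` and sign matrices `B`.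
For fixed `U` the best `B` is the sign pattern of `(Uᵀ X)ᵀ`, which gives `‖Uᵀ X‖₁`. For fixed `B`,
write `A = X B` and let `V` diagonalise `Aᵀ A`, so that the columns of `A V` are orthogonal with
lengths the singular values `σⱼ` of `A`: Cauchy–Schwarz column by column gives
`tr (Uᵀ A) ≤ ∑ σⱼ = ‖A‖₊`, with equality when `U V` has the normalised columns of `A V` as its
columns, which exists because `d₁ ≤ D₁`. The two maxima can then be exchanged, and the outer one
over the finitely many sign matrices is attained.
-/

open Module InnerProductSpace in
theorem exists_orthonormal_smul_eq_of_pairwise_inner_eq_zero {𝕜 E : Type*} [RCLike 𝕜]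
    [NormedAddCommGroup E] [InnerProductSpace 𝕜 E] [FiniteDimensional 𝕜 E] {d : ℕ}
    (hd : d ≤ finrank 𝕜 E) {c : Fin d → E} (hc : Pairwise fun i j => inner 𝕜 (c i) (c j) = 0) :
    ∃ w : Fin d → E, Orthonormal 𝕜 w ∧ ∀ j, c j = (‖c j‖ : 𝕜) • w j := by
  -- Gram–Schmidt only normalises an orthogonal family, so padding `c` with zeros up to the
  -- dimension yields an orthonormal basis extending the normalised nonzero `c j`.
  let f : Fin (finrank 𝕜 E) → E := fun k => if h : (k : ℕ) < d then c ⟨k, h⟩ else 0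
  have hf : Pairwise fun k l => inner 𝕜 (f k) (f l) = 0 := by
    intro k l hkl
    simp only [f]
    split_ifs
    · exact hc fun h => hkl (Fin.ext (Fin.mk.inj_iff.mp h))
    all_goals simp
  let b := gramSchmidtOrthonormalBasis (Fintype.card_fin _).symm f
  refine ⟨b ∘ Fin.castLE hd, b.orthonormal.comp _ (Fin.castLE_injective hd), fun j => ?_⟩
  have hfj : f (Fin.castLE hd j) = c j := by simp [f]
  by_cases hcj : c j = 0
  · simp [hcj]
  · rw [Function.comp_apply, gramSchmidtOrthonormalBasis_apply_of_orthogonal _ hf (hfj ▸ hcj), hfj,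
      smul_smul, mul_inv_cancel₀ (by simpa using hcj), one_smul]

theorem inner_toLp_transpose_apply {m n : Type*} [Fintype m] (P Q : Matrix m n ℝ) (j k : n) :
    inner ℝ (WithLp.toLp 2 (Pᵀ j)) (WithLp.toLp 2 (Qᵀ k)) = (Pᵀ * Q) j k := by
  simp [EuclideanSpace.inner_toLp_toLp, dotProduct, mul_apply, mul_comm]

theorem exists_transpose_mul_self_eq_one_and_eq_mul_diagonal {D d : ℕ} (hd : d ≤ D)
    (Q : Matrix (Fin D) (Fin d) ℝ) (hQ : (Qᵀ * Q).IsDiag) :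
    ∃ W : Matrix (Fin D) (Fin d) ℝ, Wᵀ * W = 1 ∧ Q = W * diagonal fun j => √((Qᵀ * Q) j j) := by
  obtain ⟨w, hw, hQw⟩ := exists_orthonormal_smul_eq_of_pairwise_inner_eq_zero (𝕜 := ℝ)
    (c := fun j => WithLp.toLp 2 (Qᵀ j)) (by simpa using hd)
    fun j k hjk => by simpa only [inner_toLp_transpose_apply] using hQ hjk
  refine ⟨of fun i j => w j i, ?_, ?_⟩
  · ext j k
    simpa [mul_apply, one_apply, EuclideanSpace.inner_eq_star_dotProduct, dotProduct, mul_comm]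
      using orthonormal_iff_ite.mp hw j k
  · ext i j
    have := congrArg (· i) (hQw j)
    simp only [norm_eq_sqrt_real_inner, inner_toLp_transpose_apply] at this
    simpa [mul_comm] using this

theorem trace_transpose_mul_le_sum_sqrt_mul_sqrt {m n : Type*} [Fintype m] [Fintype n]
    (P Q : Matrix m n ℝ) :
    (Pᵀ * Q).trace ≤ ∑ j, √((Pᵀ * P) j j) * √((Qᵀ * Q) j j) := by
  simp only [trace, diag, mul_apply, transpose_apply, ← pow_two]
  exact Finset.sum_le_sum fun j _ => Real.sum_mul_le_sqrt_mul_sqrt _ _ _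

namespace Matrix.IsHermitian

variable {n : Type*} [Fintype n] [DecidableEq n] {M : Matrix n n ℝ} (hM : M.IsHermitian)

theorem transpose_eigenvectorUnitary_mul_self :
    (hM.eigenvectorUnitary : Matrix n n ℝ)ᵀ * hM.eigenvectorUnitary = 1 := by
  simpa [star_eq_conjTranspose] using Unitary.coe_star_mul_self hM.eigenvectorUnitary

theorem eigenvectorUnitary_mul_transpose_self :
    (hM.eigenvectorUnitary : Matrix n n ℝ) * (hM.eigenvectorUnitary : Matrix n n ℝ)ᵀ = 1 := by
  simpa [star_eq_conjTranspose] using Unitary.coe_mul_star_self hM.eigenvectorUnitary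

theorem transpose_eigenvectorUnitary_mul_mul_eigenvectorUnitary :
    (hM.eigenvectorUnitary : Matrix n n ℝ)ᵀ * M * hM.eigenvectorUnitary =
      diagonal hM.eigenvalues := by
  simpa [star_eq_conjTranspose] using hM.conjStarAlgAut_star_eigenvectorUnitary

end Matrix.IsHermitian

section NuclearNorm

variable {D d : ℕ} (A : Matrix (Fin D) (Fin d) ℝ)

theorem nuclearNorm_eq_sum_sqrt_eigenvalues (hA : (Aᵀ * A).IsHermitian) :
    nuclearNorm A = ∑ j, √(hA.eigenvalues j) := by
  rw [nuclearNorm, trace_mul_cycle, Unitary.coe_star_mul_self, one_mul, trace_diagonal]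
  rfl

theorem transpose_mul_self_mul_eigenvectorUnitary (hA : (Aᵀ * A).IsHermitian) :
    (A * (hA.eigenvectorUnitary : Matrix (Fin d) (Fin d) ℝ))ᵀ *
      (A * (hA.eigenvectorUnitary : Matrix (Fin d) (Fin d) ℝ)) = diagonal hA.eigenvalues := by
  rw [transpose_mul, Matrix.mul_assoc, ← Matrix.mul_assoc Aᵀ, ← Matrix.mul_assoc,
    hA.transpose_eigenvectorUnitary_mul_mul_eigenvectorUnitary]

theorem trace_transpose_mul_le_nuclearNorm {U : Matrix (Fin D) (Fin d) ℝ} (hU : Uᵀ * U = 1) :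
    (Uᵀ * A).trace ≤ nuclearNorm A := by
  have hA : (Aᵀ * A).IsHermitian := by simpa using isHermitian_conjTranspose_mul_self A
  set V : Matrix (Fin d) (Fin d) ℝ := ↑hA.eigenvectorUnitary
  have hUV : (U * V)ᵀ * (U * V) = 1 := by
    rw [transpose_mul, Matrix.mul_assoc, ← Matrix.mul_assoc Uᵀ, hU, Matrix.one_mul,
      hA.transpose_eigenvectorUnitary_mul_self]
  calc (Uᵀ * A).trace = ((U * V)ᵀ * (A * V)).trace := by
        rw [transpose_mul, Matrix.mul_assoc, trace_mul_comm Vᵀ, Matrix.mul_assoc,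
          Matrix.mul_assoc A, hA.eigenvectorUnitary_mul_transpose_self, Matrix.mul_one]
    _ ≤ ∑ j, √(((U * V)ᵀ * (U * V)) j j) * √(((A * V)ᵀ * (A * V)) j j) :=
        trace_transpose_mul_le_sum_sqrt_mul_sqrt _ _
    _ = nuclearNorm A := by
        rw [hUV, transpose_mul_self_mul_eigenvectorUnitary A hA,
          nuclearNorm_eq_sum_sqrt_eigenvalues A hA]
        simp

theorem exists_trace_transpose_mul_eq_nuclearNorm (hd : d ≤ D) :
    ∃ U : Matrix (Fin D) (Fin d) ℝ, Uᵀ * U = 1 ∧ (Uᵀ * A).trace = nuclearNorm A := by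
  have hA : (Aᵀ * A).IsHermitian := by simpa using isHermitian_conjTranspose_mul_self A
  set V : Matrix (Fin d) (Fin d) ℝ := ↑hA.eigenvectorUnitary
  have hAV := transpose_mul_self_mul_eigenvectorUnitary A hA
  obtain ⟨W, hW, hAVW⟩ := exists_transpose_mul_self_eq_one_and_eq_mul_diagonal hd (A * V)
    (hAV ▸ isDiag_diagonal _)
  refine ⟨W * Vᵀ, ?_, ?_⟩
  · rw [transpose_mul, transpose_transpose, Matrix.mul_assoc, ← Matrix.mul_assoc Wᵀ, hW,
      Matrix.one_mul, hA.eigenvectorUnitary_mul_transpose_self]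
  · rw [transpose_mul, transpose_transpose, Matrix.mul_assoc, trace_mul_comm, Matrix.mul_assoc,
      hAVW, ← Matrix.mul_assoc, hW, Matrix.one_mul, hAV, nuclearNorm_eq_sum_sqrt_eigenvalues A hA]
    simp

theorem isGreatest_trace_transpose_mul_nuclearNorm (hd : d ≤ D) :
    IsGreatest {v | ∃ U : Matrix (Fin D) (Fin d) ℝ, Uᵀ * U = 1 ∧ v = (Uᵀ * A).trace}
      (nuclearNorm A) := by
  obtain ⟨U, hU, hUA⟩ := exists_trace_transpose_mul_eq_nuclearNorm A hd
  exact ⟨⟨U, hU, hUA.symm⟩, fun _ ⟨U, hU, hv⟩ => hv ▸ trace_transpose_mul_le_nuclearNorm A hU⟩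

end NuclearNorm

section L1Norm

variable {m n : ℕ} (M : Matrix (Fin m) (Fin n) ℝ)

theorem trace_mul_le_l1Norm {B : Matrix (Fin n) (Fin m) ℝ} (hB : ∀ i j, |B i j| ≤ 1) :
    (M * B).trace ≤ l1Norm M := by
  simp only [trace, diag, mul_apply, l1Norm]
  gcongr with i _ j _
  calc M i j * B j i ≤ |M i j| * |B j i| := by rw [← abs_mul]; exact le_abs_self _
    _ ≤ |M i j| := mul_le_of_le_one_right (abs_nonneg _) (hB j i)

theorem exists_sign_trace_mul_eq_l1Norm :
    ∃ B : Matrix (Fin n) (Fin m) ℝ, (∀ i j, B i j = 1 ∨ B i j = -1) ∧ (M * B).trace = l1Norm M := by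
  refine ⟨of fun j i => if 0 ≤ M i j then 1 else -1,
    fun j i => by dsimp only [of_apply]; split_ifs <;> simp, ?_⟩
  simp only [trace, diag, mul_apply, l1Norm, of_apply]
  refine Finset.sum_congr rfl fun i _ => Finset.sum_congr rfl fun j _ => ?_
  split_ifs with h
  · rw [mul_one, abs_of_nonneg h]
  · rw [mul_neg_one, abs_of_neg (not_le.mp h)]

theorem isGreatest_trace_mul_l1Norm :
    IsGreatest {v | ∃ B : Matrix (Fin n) (Fin m) ℝ, (∀ i j, B i j = 1 ∨ B i j = -1) ∧
      v = (M * B).trace} (l1Norm M) := by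
  refine ⟨?_, ?_⟩
  · obtain ⟨B, hB, hMB⟩ := exists_sign_trace_mul_eq_l1Norm M
    exact ⟨B, hB, hMB.symm⟩
  · rintro _ ⟨B, hB, rfl⟩
    exact trace_mul_le_l1Norm M fun i j => by rcases hB i j with h | h <;> simp [h]

end L1Norm

theorem finite_setOf_forall_eq_one_or_eq_neg_one {m n : Type*} [Finite m] [Finite n] :
    {B : Matrix m n ℝ | ∀ i j, B i j = 1 ∨ B i j = -1}.Finite :=
  Set.Finite.pi' fun _ => Set.Finite.pi' fun _ => Set.toFinite {1, -1}

theorem IsGreatest.of_isGreatest_swap {α β γ : Type*} [PartialOrder γ] {p : α → Prop} {q : β → Prop}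
    {f : α → β → γ} {g : α → γ} {h : β → γ} {x : γ}
    (hg : ∀ a, p a → IsGreatest {v | ∃ b, q b ∧ v = f a b} (g a))
    (hh : ∀ b, q b → IsGreatest {v | ∃ a, p a ∧ v = f a b} (h b))
    (hx : IsGreatest {v | ∃ b, q b ∧ v = h b} x) :
    IsGreatest {v | ∃ a, p a ∧ v = g a} x := by
  obtain ⟨⟨b₀, hb₀, rfl⟩, hx⟩ := hx
  have hle : ∀ a, p a → g a ≤ h b₀ := fun a ha => by
    obtain ⟨⟨b, hb, hgb⟩, -⟩ := hg a ha
    exact hgb ▸ ((hh b hb).2 ⟨a, ha, rfl⟩).trans (hx ⟨b, hb, rfl⟩)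
  obtain ⟨⟨a₀, ha₀, hfa₀⟩, -⟩ := hh b₀ hb₀
  refine ⟨⟨a₀, ha₀, le_antisymm ?_ (hle a₀ ha₀)⟩, fun _ ⟨a, ha, hv⟩ => hv ▸ hle a ha⟩
  exact hfa₀ ▸ (hg a₀ ha₀).2 ⟨b₀, hb₀, rfl⟩

theorem l1pca_eq_nucnorm_max
    {D₁ D₂ d₁ : ℕ} (hd : d₁ ≤ D₁) (X : Matrix (Fin D₁) (Fin D₂) ℝ) :
    ∃ x : ℝ,
      IsGreatest {v : ℝ | ∃ U : Matrix (Fin D₁) (Fin d₁) ℝ,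
          Uᵀ * U = 1 ∧ v = l1Norm (Uᵀ * X)} x ∧
      IsGreatest {v : ℝ | ∃ B : Matrix (Fin D₂) (Fin d₁) ℝ,
          (∀ i j, B i j = 1 ∨ B i j = -1) ∧ v = nuclearNorm (X * B)} x := by
  obtain ⟨B₀, hB₀, hB₀max⟩ := Set.exists_max_image _
    (fun B : Matrix (Fin D₂) (Fin d₁) ℝ => nuclearNorm (X * B))
    finite_setOf_forall_eq_one_or_eq_neg_one ⟨of fun _ _ => 1, fun _ _ => Or.inl rfl⟩
  have hmax : IsGreatest {v : ℝ | ∃ B : Matrix (Fin D₂) (Fin d₁) ℝ,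
      (∀ i j, B i j = 1 ∨ B i j = -1) ∧ v = nuclearNorm (X * B)} (nuclearNorm (X * B₀)) :=
    ⟨⟨B₀, hB₀, rfl⟩, fun _ ⟨B, hB, hv⟩ => hv ▸ hB₀max B hB⟩
  refine ⟨_, IsGreatest.of_isGreatest_swap (f := fun U B => (Uᵀ * X * B).trace)
    (fun U _ => isGreatest_trace_mul_l1Norm (Uᵀ * X)) (fun B _ => ?_) hmax, hmax⟩
  simpa only [Matrix.mul_assoc] using isGreatest_trace_transpose_mul_nuclearNorm (X * B) hd
end

section
/- Let X be a real D₁ × D₂ matrix and let U be a real D₁ × d₁ matrix with orthonormal columns (UᵀU = I_{d₁}). Set B := sgn(XᵀU) (entrywise sign), and let U′ be any real D₁ × d₁ matrix with orthonormal columns maximizing V ↦ Tr(VᵀXB) over all D₁ × d₁ matrices V with orthonormal columns. Then ‖UᵀX‖₁ = Tr(UᵀXB) ≤ Tr(U′ᵀXB) ≤ ‖U′ᵀX‖₁; in particular, the alternating-optimization update does not decrease the L1-PCA objective. -/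
/-!
For a fixed sign pattern `B`, `Tr(Vᵀ X B) = ∑ (Vᵀ X)ᵢⱼ Bᵢⱼ` is bounded by `‖Vᵀ X‖₁`, with
equality when `B = sgn(Vᵀ X)`. Since `sgn(Xᵀ U) = sgn(Uᵀ X)ᵀ`, the L1 objective at `U` equals
the trace objective at `U`, which the maximizer `U'` can only increase, and the trace objective
at `U'` is in turn bounded by the L1 objective at `U'`.
-/

open Matrix BigOperators

/-- Entrywise sign of a real matrix, with sgn(0) = 1. -/
noncomputable def msgn {m n : ℕ} (M : Matrix (Fin m) (Fin n) ℝ) : Matrix (Fin m) (Fin n) ℝ :=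
  fun i j => if 0 ≤ M i j then 1 else -1

lemma mul_ite_nonneg_le_abs (a b : ℝ) : a * (if 0 ≤ b then 1 else -1) ≤ |a| := by
  split_ifs
  · simpa using le_abs_self a
  · simpa using neg_le_abs a

lemma mul_ite_nonneg_self (a : ℝ) : a * (if 0 ≤ a then 1 else -1) = |a| := by
  split_ifs with h
  · simp [abs_of_nonneg h]
  · simp [abs_of_neg (not_le.mp h)]

lemma msgn_transpose {m n : ℕ} (M : Matrix (Fin m) (Fin n) ℝ) : msgn Mᵀ = (msgn M)ᵀ := rfl

lemma trace_mul_transpose_eq_sum {m n : ℕ} (A B : Matrix (Fin m) (Fin n) ℝ) :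
    (A * Bᵀ).trace = ∑ i, ∑ j, A i j * B i j := by
  simp [trace, mul_apply]

lemma trace_mul_transpose_msgn_le_l1Norm {m n : ℕ} (A M : Matrix (Fin m) (Fin n) ℝ) :
    (A * (msgn M)ᵀ).trace ≤ l1Norm A := by
  rw [trace_mul_transpose_eq_sum, l1Norm]
  gcongr with i _ j _
  exact mul_ite_nonneg_le_abs _ _

lemma trace_mul_transpose_msgn_self {m n : ℕ} (A : Matrix (Fin m) (Fin n) ℝ) :
    (A * (msgn A)ᵀ).trace = l1Norm A := by
  simp only [trace_mul_transpose_eq_sum, l1Norm, msgn, mul_ite_nonneg_self]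

theorem l1pca_ao_update_nondecreasing_general
    {D₁ D₂ d₁ : ℕ} (X : Matrix (Fin D₁) (Fin D₂) ℝ)
    (U U' : Matrix (Fin D₁) (Fin d₁) ℝ)
    (hU : Uᵀ * U = 1)
    (hU'max : ∀ V : Matrix (Fin D₁) (Fin d₁) ℝ, Vᵀ * V = 1 →
      (Vᵀ * X * msgn (Xᵀ * U)).trace ≤ (U'ᵀ * X * msgn (Xᵀ * U)).trace) :
    l1Norm (Uᵀ * X) = (Uᵀ * X * msgn (Xᵀ * U)).trace ∧
    (Uᵀ * X * msgn (Xᵀ * U)).trace ≤ (U'ᵀ * X * msgn (Xᵀ * U)).trace ∧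
    (U'ᵀ * X * msgn (Xᵀ * U)).trace ≤ l1Norm (U'ᵀ * X) := by
  have hsgn : msgn (Xᵀ * U) = (msgn (Uᵀ * X))ᵀ := by
    rw [← msgn_transpose, transpose_mul, transpose_transpose]
  refine ⟨?_, hU'max U hU, ?_⟩
  · rw [hsgn, trace_mul_transpose_msgn_self]
  · rw [hsgn]
    exact trace_mul_transpose_msgn_le_l1Norm _ _

theorem l1pca_ao_update_nondecreasing
    {D₁ D₂ d₁ : ℕ} (X : Matrix (Fin D₁) (Fin D₂) ℝ)
    (U U' : Matrix (Fin D₁) (Fin d₁) ℝ)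
    (hU : Uᵀ * U = 1) (hU' : U'ᵀ * U' = 1)
    (hU'max : ∀ V : Matrix (Fin D₁) (Fin d₁) ℝ, Vᵀ * V = 1 →
      (Vᵀ * X * msgn (Xᵀ * U)).trace ≤ (U'ᵀ * X * msgn (Xᵀ * U)).trace) :
    l1Norm (Uᵀ * X) = (Uᵀ * X * msgn (Xᵀ * U)).trace ∧
    (Uᵀ * X * msgn (Xᵀ * U)).trace ≤ (U'ᵀ * X * msgn (Xᵀ * U)).trace ∧
    (U'ᵀ * X * msgn (Xᵀ * U)).trace ≤ l1Norm (U'ᵀ * X) :=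
  l1pca_ao_update_nondecreasing_general X U U' hU hU'max
end

section
/- Let X be a real D₁ × D₂ matrix and d₁ ≤ D₁. Let (U_t)_{t≥0} be a sequence of real D₁ × d₁ matrices with orthonormal columns such that for each t ≥ 1, U_t maximizes V ↦ Tr(Vᵀ X sgn(Xᵀ U_{t−1})) over all D₁ × d₁ matrices V with orthonormal columns. Then the sequence t ↦ ‖U_tᵀX‖₁ is monotone nondecreasing and bounded above by √(d₁ D₂) · ‖X‖_F, and hence converges. -/
open Matrix BigOperators Filter

/-- Frobenius norm of a real matrix. -/
noncomputable def frobNorm {m n : ℕ} (M : Matrix (Fin m) (Fin n) ℝ) : ℝ :=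
  Real.sqrt (∑ i, ∑ j, (M i j) ^ 2)

lemma trace_mul_msgn {a b : ℕ} (A : Matrix (Fin a) (Fin b) ℝ) :
    (A * msgn Aᵀ).trace = l1Norm A := by
  simp only [trace, diag, mul_apply, l1Norm, msgn, transpose_apply]
  refine Finset.sum_congr rfl fun i _ => Finset.sum_congr rfl fun j _ => ?_
  rcases le_or_gt 0 (A i j) with h | h
  · simp [h, abs_of_nonneg h]
  · simp [not_le.mpr h, abs_of_neg h]

lemma trace_mul_msgn_le {a b : ℕ} (A B : Matrix (Fin a) (Fin b) ℝ) :
    (A * msgn Bᵀ).trace ≤ l1Norm A := by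
  simp only [trace, diag, mul_apply, l1Norm]
  refine Finset.sum_le_sum fun i _ => Finset.sum_le_sum fun j _ => ?_
  calc A i j * msgn Bᵀ j i ≤ |A i j * msgn Bᵀ j i| := le_abs_self _
    _ = |A i j| * |msgn Bᵀ j i| := abs_mul _ _
    _ ≤ |A i j| * 1 := by
        apply mul_le_mul_of_nonneg_left _ (abs_nonneg _)
        unfold msgn; split <;> simp
    _ = |A i j| := mul_one _

lemma trace_transpose_mul_self {a b : ℕ} (N : Matrix (Fin a) (Fin b) ℝ) :
    (Nᵀ * N).trace = ∑ j, ∑ i, (N i j) ^ 2 := by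
  simp [trace, diag, mul_apply, sq]

lemma frob_contract {D₁ D₂ d₁ : ℕ} (X : Matrix (Fin D₁) (Fin D₂) ℝ)
    (W : Matrix (Fin D₁) (Fin d₁) ℝ) (h : Wᵀ * W = 1) :
    ∑ i, ∑ j, ((Wᵀ * X) i j) ^ 2 ≤ ∑ i, ∑ j, (X i j) ^ 2 := by
  set P : Matrix (Fin D₁) (Fin D₁) ℝ := W * Wᵀ with hPdef
  have hP : P * P = P := by
    rw [hPdef, Matrix.mul_assoc, ← Matrix.mul_assoc Wᵀ, h, Matrix.one_mul]
  set Q : Matrix (Fin D₁) (Fin D₁) ℝ := 1 - P with hQdef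
  have hQ : Q * Q = Q := by
    rw [hQdef]; simp [sub_mul, mul_sub, hP]
  have hQt : Qᵀ = Q := by
    rw [hQdef, transpose_sub, transpose_one, hPdef, transpose_mul, transpose_transpose]
  have key : ((Q * X)ᵀ * (Q * X)).trace = (Xᵀ * (Q * X)).trace := by
    rw [transpose_mul, hQt, Matrix.mul_assoc, ← Matrix.mul_assoc Q, hQ]
  have h1 : (Xᵀ * (Q * X)).trace = (Xᵀ * X).trace - ((Wᵀ * X)ᵀ * (Wᵀ * X)).trace := by
    rw [transpose_mul, transpose_transpose, Matrix.mul_assoc]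
    rw [hQdef, Matrix.sub_mul, Matrix.one_mul, Matrix.mul_sub, trace_sub, hPdef, Matrix.mul_assoc]
  have hnn : 0 ≤ ((Q * X)ᵀ * (Q * X)).trace := by
    rw [trace_transpose_mul_self]
    positivity
  have := key ▸ hnn
  rw [h1] at this
  have h2 : ((Wᵀ * X)ᵀ * (Wᵀ * X)).trace ≤ (Xᵀ * X).trace := by linarith
  rw [trace_transpose_mul_self, trace_transpose_mul_self] at h2
  calc ∑ i, ∑ j, ((Wᵀ * X) i j) ^ 2 = ∑ j, ∑ i, ((Wᵀ * X) i j) ^ 2 := Finset.sum_comm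
    _ ≤ ∑ j, ∑ i, (X i j) ^ 2 := h2
    _ = ∑ i, ∑ j, (X i j) ^ 2 := Finset.sum_comm

lemma l1_le_sqrt_card_mul_sqrt {a b : ℕ} (M : Matrix (Fin a) (Fin b) ℝ) :
    l1Norm M ≤ Real.sqrt (a * b) * Real.sqrt (∑ i, ∑ j, (M i j) ^ 2) := by
  have key := Finset.sum_mul_sq_le_sq_mul_sq Finset.univ (fun _ : Fin a × Fin b => (1 : ℝ))
    (fun p => |M p.1 p.2|)
  simp only [one_mul, one_pow, sq_abs] at key
  have h1 : l1Norm M = ∑ p : Fin a × Fin b, |M p.1 p.2| := by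
    rw [l1Norm, Fintype.sum_prod_type]
  have h2 : (∑ p : Fin a × Fin b, (1:ℝ)) = (a * b : ℝ) := by
    simp [Finset.card_univ]
  have h3 : (∑ p : Fin a × Fin b, (M p.1 p.2) ^ 2) = ∑ i, ∑ j, (M i j) ^ 2 := by
    rw [Fintype.sum_prod_type]
  rw [h2, h3] at key
  rw [h1]
  have hnn : 0 ≤ ∑ p : Fin a × Fin b, |M p.1 p.2| :=
    Finset.sum_nonneg fun _ _ => abs_nonneg _
  have := Real.sqrt_le_sqrt key
  rwa [Real.sqrt_sq hnn, Real.sqrt_mul (by positivity)] at this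

lemma trans_helper {D₁ D₂ d₁ : ℕ} (X : Matrix (Fin D₁) (Fin D₂) ℝ)
    (W : Matrix (Fin D₁) (Fin d₁) ℝ) : Xᵀ * W = (Wᵀ * X)ᵀ := by
  rw [transpose_mul, transpose_transpose]

theorem l1pca_ao_converges
    {D₁ D₂ d₁ : ℕ} (hd : d₁ ≤ D₁) (X : Matrix (Fin D₁) (Fin D₂) ℝ)
    (U : ℕ → Matrix (Fin D₁) (Fin d₁) ℝ)
    (horth : ∀ t, (U t)ᵀ * (U t) = 1)
    (hmax : ∀ t : ℕ, ∀ V : Matrix (Fin D₁) (Fin d₁) ℝ, Vᵀ * V = 1 →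
      (Vᵀ * X * msgn (Xᵀ * U t)).trace ≤ ((U (t + 1))ᵀ * X * msgn (Xᵀ * U t)).trace) :
    Monotone (fun t => l1Norm ((U t)ᵀ * X)) ∧
    (∀ t, l1Norm ((U t)ᵀ * X) ≤ Real.sqrt (d₁ * D₂) * frobNorm X) ∧
    ∃ L : ℝ, Tendsto (fun t => l1Norm ((U t)ᵀ * X)) atTop (nhds L) := by
  have hmono : Monotone (fun t => l1Norm ((U t)ᵀ * X)) := by
    apply monotone_nat_of_le_succ
    intro t
    calc l1Norm ((U t)ᵀ * X)
        = ((U t)ᵀ * X * msgn (Xᵀ * U t)).trace := by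
          rw [trans_helper X (U t), trace_mul_msgn]
      _ ≤ ((U (t + 1))ᵀ * X * msgn (Xᵀ * U t)).trace := hmax t (U t) (horth t)
      _ ≤ l1Norm ((U (t + 1))ᵀ * X) := by
          rw [trans_helper X (U t)]
          exact trace_mul_msgn_le _ _
  have hbd : ∀ t, l1Norm ((U t)ᵀ * X) ≤ Real.sqrt (d₁ * D₂) * frobNorm X := by
    intro t
    calc l1Norm ((U t)ᵀ * X)
        ≤ Real.sqrt (d₁ * D₂) * Real.sqrt (∑ i, ∑ j, (((U t)ᵀ * X) i j) ^ 2) :=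
          l1_le_sqrt_card_mul_sqrt _
      _ ≤ Real.sqrt (d₁ * D₂) * frobNorm X := by
          apply mul_le_mul_of_nonneg_left _ (Real.sqrt_nonneg _)
          exact Real.sqrt_le_sqrt (frob_contract X (U t) (horth t))
  refine ⟨hmono, hbd, ?_⟩
  exact ⟨_, tendsto_atTop_ciSup hmono ⟨Real.sqrt (d₁ * D₂) * frobNorm X,
    Set.forall_mem_range.mpr hbd⟩⟩
end

section
/- Let X : Fin D₁ × Fin D₂ × Fin D₃ → ℝ be a 3-way real tensor, and for matrices U₁ (D₁ × d₁), U₂ (D₂ × d₂), U₃ (D₃ × d₃) define the L1-Tucker objective f(U₁,U₂,U₃) := Σ_{i,j,k} |Σ_{a,b,c} X(a,b,c)·(U₁)_{ai}(U₂)_{bj}(U₃)_{ck}|. Let (U₁^{(q)}, U₂^{(q)}, U₃^{(q)})_{q≥0} be sequences of matrices with orthonormal columns such that the sequence q ↦ f(U₁^{(q)}, U₂^{(q)}, U₃^{(q)}) is monotone nondecreasing. Then this sequence is bounded above by √(d₁d₂d₃)·‖X‖_F and converges to a finite limit. -/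
open BigOperators Matrix Filter

/-- The L1-Tucker objective for a 3-way tensor: the entrywise L1 norm of the Tucker core. -/
noncomputable def l1TuckerObj {D₁ D₂ D₃ d₁ d₂ d₃ : ℕ}
    (X : Fin D₁ × Fin D₂ × Fin D₃ → ℝ)
    (U₁ : Matrix (Fin D₁) (Fin d₁) ℝ) (U₂ : Matrix (Fin D₂) (Fin d₂) ℝ)
    (U₃ : Matrix (Fin D₃) (Fin d₃) ℝ) : ℝ :=
  ∑ i : Fin d₁, ∑ j : Fin d₂, ∑ k : Fin d₃,
    |∑ a : Fin D₁, ∑ b : Fin D₂, ∑ c : Fin D₃, X (a, b, c) * U₁ a i * U₂ b j * U₃ c k|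

/-!
The Tucker core is the vector of coefficients of `vec X` against the columns of
`U₁ ⊗ U₂ ⊗ U₃`, which are orthonormal because the Kronecker product of matrices with
orthonormal columns has orthonormal columns. Bessel's inequality therefore bounds its
Euclidean norm by `‖X‖_F`, Cauchy–Schwarz over its `d₁ d₂ d₃` entries bounds its L1 norm by
`√(d₁ d₂ d₃) ‖X‖_F`, and a bounded monotone sequence converges.
-/

open scoped Kronecker

namespace Matrix

variable {m n p q : Type*}

theorem sum_sq_vecMul_le_of_transpose_mul_self_eq_one [Fintype m] [Fintype n] [DecidableEq n]
    {U : Matrix m n ℝ} (hU : Uᵀ * U = 1) (v : m → ℝ) : ∑ i, (v ᵥ* U) i ^ 2 ≤ ∑ a, v a ^ 2 := by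
  let col : n → EuclideanSpace ℝ m := fun i => WithLp.toLp 2 (Uᵀ i)
  have hcol : Orthonormal ℝ col := by
    rw [orthonormal_iff_ite]
    intro i j
    simpa [col, PiLp.inner_apply, mul_apply, one_apply, dotProduct, mul_comm] using
      congr_fun₂ hU i j
  have := hcol.sum_inner_products_le (s := Finset.univ) (WithLp.toLp 2 v)
  rw [EuclideanSpace.real_norm_sq_eq] at this
  simpa [col, PiLp.inner_apply, vecMul, dotProduct, mul_comm] using this

theorem transpose_mul_self_kronecker_eq_one [Fintype m] [Fintype p] [DecidableEq n]
    [DecidableEq q] {A : Matrix m n ℝ} {B : Matrix p q ℝ} (hA : Aᵀ * A = 1) (hB : Bᵀ * B = 1) :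
    (A ⊗ₖ B)ᵀ * (A ⊗ₖ B) = 1 := by
  rw [← kroneckerMap_transpose, ← mul_kronecker_mul, hA, hB, one_kronecker_one]

end Matrix

theorem Finset.sum_abs_le_sqrt_card_mul_sqrt_sum_sq {ι : Type*} (s : Finset ι) (f : ι → ℝ) :
    ∑ i ∈ s, |f i| ≤ √(s.card : ℝ) * √(∑ i ∈ s, f i ^ 2) := by
  rw [← Real.sqrt_mul (by positivity)]
  apply Real.le_sqrt_of_sq_le
  simpa using sq_sum_le_card_mul_sum_sq (s := s) (f := fun i => |f i|)

section Tucker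

variable {D₁ D₂ D₃ d₁ d₂ d₃ : ℕ} (X : Fin D₁ × Fin D₂ × Fin D₃ → ℝ)
  (U₁ : Matrix (Fin D₁) (Fin d₁) ℝ) (U₂ : Matrix (Fin D₂) (Fin d₂) ℝ)
  (U₃ : Matrix (Fin D₃) (Fin d₃) ℝ)

def tuckerCore (i : Fin d₁) (j : Fin d₂) (k : Fin d₃) : ℝ :=
  ∑ a : Fin D₁, ∑ b : Fin D₂, ∑ c : Fin D₃, X (a, b, c) * U₁ a i * U₂ b j * U₃ c k

theorem l1TuckerObj_eq_sum_abs_tuckerCore :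
    l1TuckerObj X U₁ U₂ U₃ = ∑ i, ∑ j, ∑ k, |tuckerCore X U₁ U₂ U₃ i j k| :=
  rfl

theorem tuckerCore_eq_vecMul_kronecker (i : Fin d₁) (j : Fin d₂) (k : Fin d₃) :
    tuckerCore X U₁ U₂ U₃ i j k =
      ((fun p : (Fin D₁ × Fin D₂) × Fin D₃ => X (p.1.1, p.1.2, p.2)) ᵥ* (U₁ ⊗ₖ U₂ ⊗ₖ U₃))
        ((i, j), k) := by
  simp only [tuckerCore, vecMul, dotProduct, kronecker_apply, Fintype.sum_prod_type, mul_assoc]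

theorem sum_sq_tuckerCore_le (h₁ : U₁ᵀ * U₁ = 1) (h₂ : U₂ᵀ * U₂ = 1) (h₃ : U₃ᵀ * U₃ = 1) :
    ∑ i, ∑ j, ∑ k, tuckerCore X U₁ U₂ U₃ i j k ^ 2 ≤ ∑ a, ∑ b, ∑ c, X (a, b, c) ^ 2 := by
  have h := sum_sq_vecMul_le_of_transpose_mul_self_eq_one
    (transpose_mul_self_kronecker_eq_one (transpose_mul_self_kronecker_eq_one h₁ h₂) h₃)
    (fun p : (Fin D₁ × Fin D₂) × Fin D₃ => X (p.1.1, p.1.2, p.2))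
  simpa only [Fintype.sum_prod_type, ← tuckerCore_eq_vecMul_kronecker] using h

theorem l1TuckerObj_le_sqrt_mul_sqrt (h₁ : U₁ᵀ * U₁ = 1) (h₂ : U₂ᵀ * U₂ = 1)
    (h₃ : U₃ᵀ * U₃ = 1) :
    l1TuckerObj X U₁ U₂ U₃ ≤
      √(d₁ * d₂ * d₃) * √(∑ a : Fin D₁, ∑ b : Fin D₂, ∑ c : Fin D₃, X (a, b, c) ^ 2) := by
  have h := Finset.sum_abs_le_sqrt_card_mul_sqrt_sum_sq Finset.univ
    (fun p : Fin d₁ × Fin d₂ × Fin d₃ => tuckerCore X U₁ U₂ U₃ p.1 p.2.1 p.2.2)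
  simp only [Finset.card_univ, Fintype.card_prod, Fintype.card_fin, Fintype.sum_prod_type,
    Nat.cast_mul, ← mul_assoc] at h
  rw [l1TuckerObj_eq_sum_abs_tuckerCore]
  refine h.trans ?_
  gcongr
  exact sum_sq_tuckerCore_le X U₁ U₂ U₃ h₁ h₂ h₃

end Tucker

theorem l1hooi_bounded_and_converges
    {D₁ D₂ D₃ d₁ d₂ d₃ : ℕ}
    (X : Fin D₁ × Fin D₂ × Fin D₃ → ℝ)
    (U₁ : ℕ → Matrix (Fin D₁) (Fin d₁) ℝ)
    (U₂ : ℕ → Matrix (Fin D₂) (Fin d₂) ℝ)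
    (U₃ : ℕ → Matrix (Fin D₃) (Fin d₃) ℝ)
    (horth₁ : ∀ q, (U₁ q)ᵀ * (U₁ q) = 1)
    (horth₂ : ∀ q, (U₂ q)ᵀ * (U₂ q) = 1)
    (horth₃ : ∀ q, (U₃ q)ᵀ * (U₃ q) = 1)
    (hmono : Monotone (fun q => l1TuckerObj X (U₁ q) (U₂ q) (U₃ q))) :
    (∀ q, l1TuckerObj X (U₁ q) (U₂ q) (U₃ q) ≤
      Real.sqrt (d₁ * d₂ * d₃) *
        Real.sqrt (∑ a : Fin D₁, ∑ b : Fin D₂, ∑ c : Fin D₃, X (a, b, c) ^ 2)) ∧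
    ∃ L : ℝ, Tendsto (fun q => l1TuckerObj X (U₁ q) (U₂ q) (U₃ q)) atTop (nhds L) := by
  have hbound q := l1TuckerObj_le_sqrt_mul_sqrt X _ _ _ (horth₁ q) (horth₂ q) (horth₃ q)
  exact ⟨hbound, _, tendsto_atTop_ciSup hmono ⟨_, Set.forall_mem_range.2 hbound⟩⟩
end
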